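/- Let μ be a probability measure on the unit circle S¹ with arclength distance d. Suppose there exists a point p̂ ∈ S¹ such that μ({p ∈ S¹ : d(p,p̂) ≤ π/2}) = 1 and μ({p ∈ S¹ : d(p,p̂) < π/2}) > 0 (the support of μ is contained in a closed hemisphere, with positive mass in the open hemisphere). Then μ admits a well-defined Fréchet mean, i.e. the Fréchet functional F_μ has a unique global minimizer, and this minimizer lies in {p ∈ S¹ : d(p,p̂) < π/2}. -/

import Mathlib

open MeasureTheory Real Set Filter

noncomputable section

/-- The unit circle `S¹` in `ℝ² ≃ ℂ`. -/
abbrev S1 := {x : ℂ // ‖x‖ = 1}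

/-- The arclength distance on `S¹`. -/
def dS1 (x p : S1) : ℝ := 2 * Real.arcsin (‖(x : ℂ) - (p : ℂ)‖ / 2)

/-- The Fréchet functional of a measure `μ` on `S¹`. -/
def frechet (μ : Measure S1) (p : S1) : ℝ := (1/2) * ∫ x, (dS1 x p)^2 ∂μ

/-- The normal coordinate chart centered at `p`: `θ ↦ R_θ p`. -/
def chart (p : S1) (θ : ℝ) : S1 :=
  ⟨Complex.exp (θ * Complex.I) * (p : ℂ), by
    rw [norm_mul, Complex.norm_exp_ofReal_mul_I, p.2, mul_one]⟩

/-- The inverse chart, with values in `[-π, π)`. -/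
def invChart (p₀ : S1) (p : S1) : ℝ :=
  if Complex.arg ((p : ℂ) / (p₀ : ℂ)) = π then -π else Complex.arg ((p : ℂ) / (p₀ : ℂ))

/-- The image measure `μ_{p₀}` of `μ` in the normal chart centered at `p₀`. -/
def chartMeasure (μ : Measure S1) (p₀ : S1) : Measure ℝ := Measure.map (invChart p₀) μ

/-- `m(μ_{p₀})`, the Euclidean mean of the image measure in the chart centered at `p₀`. -/
def mMean (μ : Measure S1) (p₀ : S1) : ℝ := ∫ t, t ∂(chartMeasure μ p₀)

/-- The antipodal point (cut locus) of `p`. -/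
def antipode (p : S1) : S1 := ⟨-(p : ℂ), by rw [norm_neg]; exact p.2⟩

/-- The (left-continuous extension of the) derivative of `θ ↦ F_μ(e_{p₀}(θ))`. -/
def extDerivS1 (μ : Measure S1) (p₀ : S1) (θ : ℝ) : ℝ :=
  if 0 ≤ θ then θ - 2*π*(chartMeasure μ p₀ (Ico (-π) (-π+θ))).toReal - mMean μ p₀
  else θ + 2*π*(chartMeasure μ p₀ (Ico (π+θ) π)).toReal - mMean μ p₀

def basePt : S1 := ⟨1, by norm_num⟩

/-- The (unnormalized) arclength measure on `S¹`, of total mass `2π`. -/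
def arcMeasure : Measure S1 := Measure.map (chart basePt) (volume.restrict (Ico (-π) π))

/-- Property `P(p, α, φ)` for a density `f` on `S¹`. -/
def propP (f : S1 → ℝ) (p : S1) (α φ : ℝ) : Prop :=
  ∀ θ ∈ Ico (-π) π, φ ≤ |θ| → f (chart p θ) ≤ (1 - α)/(2*π)

/-! In the chart `θ ↦ chart p̂ θ`, `μ` is carried by `[-π/2, π/2]`, and from there the distance to
a point `θ` with `|θ| ≤ π/2` is just `|t - θ|`. On that arc `F_μ = (Var + (m - θ)²) / 2`, where `m`
is the Euclidean mean of the chart image, and `|m| < π/2` thanks to the mass in the open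
hemisphere. A point `θ ∈ (π/2, 3π/2)` outside the hemisphere is farther from every point of the
closed hemisphere than its mirror image `π - θ` across the boundary diameter, strictly so from the
open hemisphere; hence `F_μ(θ) > (Var + (m - (π - θ))²) / 2 ≥ F_μ(m)`. -/

open ProbabilityTheory

lemma chart_zero (p : S1) : chart p 0 = p :=
  Subtype.ext <| by simp [chart]

lemma chart_periodic (p : S1) : Function.Periodic (chart p) (2 * π) := fun θ => by
  apply Subtype.ext
  simp only [chart, Complex.ofReal_add, Complex.ofReal_mul, add_mul, Complex.exp_add]
  push_cast
  rw [Complex.exp_two_pi_mul_I, mul_one]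

lemma invChart_mem_Ico (p x : S1) : invChart p x ∈ Ico (-π) π := by
  unfold invChart
  split_ifs with h
  · exact ⟨le_rfl, by linarith [pi_pos]⟩
  · exact ⟨(Complex.neg_pi_lt_arg _).le, (Complex.arg_le_pi _).lt_of_ne h⟩

lemma chart_invChart (p x : S1) : chart p (invChart p x) = x := by
  have hp : (p : ℂ) ≠ 0 := by simp [← norm_ne_zero_iff, p.2]
  have hquot : Complex.exp (Complex.arg ((x : ℂ) / p) * Complex.I) = (x : ℂ) / p := by
    simpa [norm_div, x.2, p.2] using Complex.norm_mul_exp_arg_mul_I ((x : ℂ) / p)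
  apply Subtype.ext
  unfold invChart
  split_ifs with h
  · rw [h, Complex.exp_pi_mul_I] at hquot
    simp only [chart, Complex.ofReal_neg, neg_mul, Complex.exp_neg, Complex.exp_pi_mul_I]
    rw [inv_neg, inv_one, hquot, div_mul_cancel₀ _ hp]
  · simp only [chart, hquot, div_mul_cancel₀ _ hp]

lemma measurable_invChart (p : S1) : Measurable (invChart p) := by
  have harg : Measurable fun x : S1 => Complex.arg ((x : ℂ) / p) :=
    Complex.measurable_arg.comp (measurable_subtype_coe.div_const _)
  exact Measurable.ite (harg (measurableSet_singleton π)) measurable_const harg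

lemma exists_chart_eq_mem_Ico (p q : S1) (a : ℝ) : ∃ θ ∈ Ico a (a + 2 * π), chart p θ = q := by
  obtain ⟨θ, hθ, h⟩ := (chart_periodic p).exists_mem_Ico two_pi_pos (invChart p q) a
  exact ⟨θ, hθ, by rw [← h, chart_invChart]⟩

lemma dS1_chart (p : S1) {a b : ℝ} (h : |a - b| ≤ π) : dS1 (chart p a) (chart p b) = |a - b| := by
  have hnorm : ‖(chart p a : ℂ) - chart p b‖ = ‖2 * Real.sin ((a - b) / 2)‖ := by
    have : (chart p a : ℂ) - chart p b
        = (Complex.exp (Complex.I * (a - b : ℝ)) - 1) * (Complex.exp (b * Complex.I) * p) := by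
      simp only [chart]
      rw [sub_mul, one_mul, ← mul_assoc, ← Complex.exp_add]
      push_cast; ring_nf
    rw [this, norm_mul, norm_mul, Complex.norm_exp_ofReal_mul_I, p.2, mul_one, mul_one,
      Complex.norm_exp_I_mul_ofReal_sub_one]
  have hsin : |Real.sin ((a - b) / 2)| = Real.sin (|a - b| / 2) := by
    rcases abs_cases (a - b) with ⟨h', h''⟩ | ⟨h', h''⟩ <;> rw [h'] at h ⊢
    · exact abs_of_nonneg (sin_nonneg_of_nonneg_of_le_pi (by linarith) (by linarith))
    · rw [← abs_neg, ← Real.sin_neg, ← neg_div]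
      exact abs_of_nonneg (sin_nonneg_of_nonneg_of_le_pi (by linarith) (by linarith))
  rw [dS1, hnorm, Real.norm_eq_abs, abs_mul, abs_two, mul_div_cancel_left₀ _ two_ne_zero, hsin,
    arcsin_sin (by linarith [abs_nonneg (a - b)]) (by linarith)]
  ring

lemma dS1_chart_self (p : S1) {θ : ℝ} (h : |θ| ≤ π) : dS1 (chart p θ) p = |θ| := by
  simpa [chart_zero] using dS1_chart p (b := 0) (by rwa [sub_zero])

lemma dS1_eq_abs_invChart (p x : S1) : dS1 x p = |invChart p x| := by
  obtain ⟨h₁, h₂⟩ := invChart_mem_Ico p x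
  rw [← dS1_chart_self p (abs_le.2 ⟨h₁, h₂.le⟩), chart_invChart]

lemma dS1_chart_eq_min (p : S1) {a b : ℝ} (hab : a ≤ b) (hba : b ≤ a + 2 * π) :
    dS1 (chart p a) (chart p b) = min (b - a) (2 * π - (b - a)) := by
  rcases le_or_gt (b - a) π with h | h
  · rw [dS1_chart p (by rw [abs_sub_comm, abs_of_nonneg (by linarith)]; exact h),
      abs_sub_comm, abs_of_nonneg (by linarith), min_eq_left (by linarith)]
  · rw [← (chart_periodic p).sub_eq b, dS1_chart p (by rw [abs_le]; constructor <;> linarith),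
      abs_of_nonneg (by linarith), min_eq_right (by linarith)]
    ring

lemma abs_sub_pi_sub_le_dS1_chart (p : S1) {t θ : ℝ} (ht : |t| ≤ π / 2) (hθ₁ : π / 2 ≤ θ)
    (hθ₂ : θ ≤ 3 * π / 2) : |t - (π - θ)| ≤ dS1 (chart p t) (chart p θ) := by
  rw [abs_le] at ht
  rw [dS1_chart_eq_min p (by linarith) (by linarith), le_min_iff, abs_le, abs_le]
  refine ⟨⟨?_, ?_⟩, ?_, ?_⟩ <;> linarith

lemma abs_sub_pi_sub_lt_dS1_chart (p : S1) {t θ : ℝ} (ht : |t| < π / 2) (hθ₁ : π / 2 < θ)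
    (hθ₂ : θ < 3 * π / 2) : |t - (π - θ)| < dS1 (chart p t) (chart p θ) := by
  rw [abs_lt] at ht
  rw [dS1_chart_eq_min p (by linarith) (by linarith), lt_min_iff, abs_lt, abs_lt]
  refine ⟨⟨?_, ?_⟩, ?_, ?_⟩ <;> linarith

lemma continuous_dS1_left (q : S1) : Continuous fun x => dS1 x q := by
  unfold dS1; fun_prop

lemma dS1_nonneg (x q : S1) : 0 ≤ dS1 x q :=
  mul_nonneg zero_le_two (arcsin_nonneg.2 (by positivity))

lemma dS1_le_pi (x q : S1) : dS1 x q ≤ π := by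
  unfold dS1; linarith [arcsin_le_pi_div_two (‖(x : ℂ) - q‖ / 2)]

section Measure

variable {μ : Measure S1}

lemma integrable_dS1_sq [IsFiniteMeasure μ] (q : S1) : Integrable (fun x => dS1 x q ^ 2) μ :=
  Integrable.of_bound ((continuous_dS1_left q).pow 2).aestronglyMeasurable (π ^ 2)
    (ae_of_all _ fun x => by
      rw [Real.norm_eq_abs, abs_pow, abs_of_nonneg (dS1_nonneg x q)]
      exact pow_le_pow_left₀ (dS1_nonneg x q) (dS1_le_pi x q) 2)

lemma memLp_invChart [IsFiniteMeasure μ] (p : S1) : MemLp (invChart p) 2 μ :=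
  MemLp.of_bound (measurable_invChart p).aestronglyMeasurable π
    (ae_of_all _ fun x => by
      obtain ⟨h₁, h₂⟩ := invChart_mem_Ico p x
      exact abs_le.2 ⟨h₁, h₂.le⟩)

end Measure

section Integral

variable {Ω : Type*} [MeasurableSpace Ω] {μ : Measure Ω}

lemma integral_lt_integral_of_ae_le_of_measure_pos {f g : Ω → ℝ} (hf : Integrable f μ)
    (hg : Integrable g μ) (hfg : f ≤ᵐ[μ] g) (hlt : 0 < μ {x | f x < g x}) :
    ∫ x, f x ∂μ < ∫ x, g x ∂μ := by
  rw [← sub_pos, ← integral_sub hg hf]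
  refine (integral_pos_iff_support_of_nonneg_ae (hfg.mono fun x hx => sub_nonneg.2 hx)
    (hg.sub hf)).2 (hlt.trans_le (measure_mono fun x hx => ?_))
  exact (sub_pos.2 hx).ne'

lemma integral_sub_const_sq [IsProbabilityMeasure μ] {X : Ω → ℝ} (hX : MemLp X 2 μ) (c : ℝ) :
    ∫ ω, (X ω - c) ^ 2 ∂μ = Var[X; μ] + (μ[X] - c) ^ 2 := by
  have h := variance_eq_sub (hX.sub (memLp_const c))
  rw [show (X - fun _ => c) = fun ω => X ω - c from rfl,
    variance_sub_const hX.aestronglyMeasurable,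
    integral_sub (hX.integrable one_le_two) (integrable_const c)] at h
  simp only [Pi.pow_apply, integral_const, probReal_univ, smul_eq_mul, one_mul] at h
  linarith

end Integral

section Frechet

variable {μ : Measure S1} {p : S1}

lemma frechet_chart_eq [IsProbabilityMeasure μ] {θ : ℝ}
    (h : ∀ᵐ x ∂μ, |invChart p x - θ| ≤ π) :
    frechet μ (chart p θ) = (Var[invChart p; μ] + (μ[invChart p] - θ) ^ 2) / 2 := by
  rw [frechet, ← integral_sub_const_sq (memLp_invChart p) θ, integral_congr_ae]
  · ring
  filter_upwards [h] with x hx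
  have hd := dS1_chart p hx
  rw [chart_invChart] at hd
  rw [hd, sq_abs]

lemma abs_integral_invChart_lt [IsProbabilityMeasure μ] (hle : ∀ᵐ x ∂μ, dS1 x p ≤ π / 2)
    (hpos : 0 < μ {x | dS1 x p < π / 2}) : |μ[invChart p]| < π / 2 := by
  simp only [dS1_eq_abs_invChart] at hle hpos
  calc |μ[invChart p]| ≤ ∫ x, |invChart p x| ∂μ := abs_integral_le_integral_abs
    _ < ∫ _, π / 2 ∂μ :=
      integral_lt_integral_of_ae_le_of_measure_pos ((memLp_invChart p).integrable one_le_two).abs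
        (integrable_const _) hle hpos
    _ = π / 2 := by simp

lemma integral_sq_sub_pi_sub_lt_frechet [IsFiniteMeasure μ] (hle : ∀ᵐ x ∂μ, dS1 x p ≤ π / 2)
    (hpos : 0 < μ {x | dS1 x p < π / 2}) {θ : ℝ} (hθ₁ : π / 2 < θ) (hθ₂ : θ < 3 * π / 2) :
    (∫ x, (invChart p x - (π - θ)) ^ 2 ∂μ) / 2 < frechet μ (chart p θ) := by
  have hd (x : S1) : dS1 x (chart p θ) = dS1 (chart p (invChart p x)) (chart p θ) := by
    rw [chart_invChart]
  simp only [dS1_eq_abs_invChart] at hle hpos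
  have hlt : ∫ x, (invChart p x - (π - θ)) ^ 2 ∂μ < ∫ x, dS1 x (chart p θ) ^ 2 ∂μ := by
    refine integral_lt_integral_of_ae_le_of_measure_pos
      ((memLp_invChart p).sub (memLp_const _)).integrable_sq (integrable_dS1_sq _) ?_
      (hpos.trans_le (measure_mono fun x (hx : |invChart p x| < π / 2) => ?_))
    · filter_upwards [hle] with x hx
      rw [hd, ← sq_abs (invChart p x - _)]
      exact pow_le_pow_left₀ (abs_nonneg _) (abs_sub_pi_sub_le_dS1_chart p hx hθ₁.le hθ₂.le) 2
    · rw [mem_ofPred_eq, hd, ← sq_abs (invChart p x - _)]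
      exact pow_lt_pow_left₀ (abs_sub_pi_sub_lt_dS1_chart p hx hθ₁ hθ₂) (abs_nonneg _)
        two_ne_zero
  rw [frechet]
  linarith

end Frechet

/-- a measure supported in a closed hemisphere, with positive mass in the
open hemisphere, admits a well-defined Fréchet mean, which lies in the open hemisphere. -/
theorem frechet_mean_of_hemisphere (μ : Measure S1) [IsProbabilityMeasure μ] (phat : S1)
    (h1 : μ {p : S1 | dS1 p phat ≤ π/2} = 1)
    (h2 : 0 < μ {p : S1 | dS1 p phat < π/2}) :
    ∃ pstar : S1, (∀ q : S1, q ≠ pstar → frechet μ pstar < frechet μ q) ∧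
      dS1 pstar phat < π/2 := by
  have hle : ∀ᵐ x ∂μ, dS1 x phat ≤ π / 2 :=
    (ae_iff_measure_eq (measurableSet_le (continuous_dS1_left phat).measurable
      measurable_const).nullMeasurableSet).2 (by rw [h1, measure_univ])
  set m := μ[invChart phat]
  have hm : |m| < π / 2 := abs_integral_invChart_lt hle h2
  have hcentral {θ : ℝ} (hθ : |θ| ≤ π / 2) :
      frechet μ (chart phat θ) = (Var[invChart phat; μ] + (m - θ) ^ 2) / 2 :=
    frechet_chart_eq <| hle.mono fun x hx => by
      rw [dS1_eq_abs_invChart] at hx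
      exact (abs_sub _ _).trans (by linarith)
  have hm_mem : dS1 (chart phat m) phat < π / 2 := by
    rwa [dS1_chart_self phat (by linarith [pi_pos])]
  refine ⟨chart phat m, fun q hq => ?_, hm_mem⟩
  obtain ⟨θ, ⟨hθ₁, hθ₂⟩, rfl⟩ := exists_chart_eq_mem_Ico phat q (-(π / 2))
  rw [hcentral hm.le, sub_self, zero_pow two_ne_zero, add_zero]
  rcases le_or_gt θ (π / 2) with hθ | hθ
  · have hmθ : m - θ ≠ 0 := sub_ne_zero.2 fun h => hq (by rw [h])
    rw [hcentral (abs_le.2 ⟨hθ₁, hθ⟩)]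
    have := sq_pos_of_ne_zero hmθ
    linarith
  · calc Var[invChart phat; μ] / 2
        ≤ (Var[invChart phat; μ] + (m - (π - θ)) ^ 2) / 2 := by linarith [sq_nonneg (m - (π - θ))]
      _ = (∫ x, (invChart phat x - (π - θ)) ^ 2 ∂μ) / 2 := by
        rw [integral_sub_const_sq (memLp_invChart phat)]
      _ < frechet μ (chart phat θ) := integral_sq_sub_pi_sub_lt_frechet hle h2 hθ (by linarith)
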